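/- Solution formula for the inhomogeneous right-sided fractional equation (equation (19) solves equation (18) of the paper): let 0 < α < 1, l > 0, k ∈ ℝ, and let b, c be real constants. Define φ(s) := c·(l−s)^{α−1} E_{α,α}(k(l−s)^α) + b·l^{α−2} ∫_s^l (t−s)^{α−1} E_{α,α}(k(t−s)^α)·(l−t)^{1−α} dt for s ∈ (0,l), where E_{α,α}(z) := Σ_{n=0}^∞ z^n / Γ(αn + α). Then for every s ∈ (0,l), (D_{l−}^α φ)(s) − k φ(s) = b·l^{α−2}·(l−s)^{1−α}. -/

import Mathlib

open MeasureTheory Set Filter Topology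

/-- Left Riemann–Liouville fractional integral of order `α` based at `a` (real-valued). -/
noncomputable def RLIplusR (α a : ℝ) (f : ℝ → ℝ) (x : ℝ) : ℝ :=
  (1 / Real.Gamma α) * ∫ t in a..x, f t * (x - t) ^ (α - 1)

/-- Right Riemann–Liouville fractional integral of order `α` based at `b` (real-valued). -/
noncomputable def RLIminusR (α b : ℝ) (f : ℝ → ℝ) (x : ℝ) : ℝ :=
  (1 / Real.Gamma α) * ∫ t in x..b, f t * (t - x) ^ (α - 1)

/-- Left Riemann–Liouville fractional derivative of order `α` (`0 < α < 1`), real-valued. -/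
noncomputable def RLDplusR (α a : ℝ) (f : ℝ → ℝ) (x : ℝ) : ℝ :=
  deriv (RLIplusR (1 - α) a f) x

/-- Right Riemann–Liouville fractional derivative of order `α` (`0 < α < 1`), real-valued. -/
noncomputable def RLDminusR (α b : ℝ) (f : ℝ → ℝ) (x : ℝ) : ℝ :=
  - deriv (RLIminusR (1 - α) b f) x

/-- The two-parameter Mittag-Leffler function `E_{α,β}(x) = Σ_{n=0}^∞ xⁿ / Γ(αn + β)`
(real argument). -/
noncomputable def mittagLeffler (α β x : ℝ) : ℝ :=
  ∑' n : ℕ, x ^ n / Real.Gamma (α * n + β)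

/-!
Write `e_β(u) = u ^ (β - 1) E_{α,β}(k u ^ α)` (`mlKernel α k β u`). Integrating the series
termwise against `(t - x) ^ (q - 1)`, each term is a Beta integral, so the fractional integral
of order `q` sends `e_β` to `e_{β+q}` (on either side), and splitting off the first term of the
series gives `e_β(u) = u ^ (β - 1) / Γ(β) + k e_{β+α}(u)`. Thus
`φ(t) = c e_α(l - t) + d e_2(l - t)` with `d = b l ^ (α - 2) Γ(2 - α)`, its fractional integral
of order `1 - α` is `c e_1(l - ·) + d e_{3-α}(l - ·)`, and since `e_{β+1}' = e_β` and
`e_1' = k e_α`,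
`D^α φ(s) = c k e_α(l - s) + d e_{2-α}(l - s) = k φ(s) + d (l - s) ^ (1 - α) / Γ(2 - α)`.
-/

section MittagLeffler

variable {α β : ℝ}

/-- A consequence of the log-convexity of `Γ` on `[y + α - 1, y + α]`. -/
lemma Gamma_mul_rpow_le_Gamma_add (hα : 0 < α) (hα1 : α ≤ 1) {y : ℝ} (hy : 1 ≤ y) :
    Real.Gamma y * (y + α - 1) ^ α ≤ Real.Gamma (y + α) := by
  set z := y + α - 1
  have hz : 0 < z := by linarith
  have hΓz := Real.Gamma_pos_of_pos hz
  have hconv := Real.convexOn_log_Gamma.2 (mem_Ioi.mpr (by linarith : 0 < z + 1)) (mem_Ioi.mpr hz)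
    (by linarith : 0 ≤ 1 - α) hα.le (by ring)
  simp only [smul_eq_mul, Function.comp_apply, show (1 - α) * (z + 1) + α * z = y by ring,
    Real.Gamma_add_one hz.ne', Real.log_mul hz.ne' hΓz.ne'] at hconv
  have hΓy := Real.Gamma_pos_of_pos (by linarith : 0 < y)
  rw [show y + α = z + 1 by ring, Real.Gamma_add_one hz.ne',
    ← Real.log_le_log_iff (by positivity) (by positivity), Real.log_mul hΓy.ne' (by positivity),
    Real.log_rpow hz, Real.log_mul hz.ne' hΓz.ne']
  linarith

lemma summable_mittagLeffler (hα : 0 < α) (hα1 : α ≤ 1) (hβ : 0 < β) (x : ℝ) :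
    Summable fun n : ℕ => x ^ n / Real.Gamma (α * n + β) := by
  have hΓ (n : ℕ) : 0 < Real.Gamma (α * n + β) := Real.Gamma_pos_of_pos (by positivity)
  refine summable_of_ratio_norm_eventually_le (r := 1 / 2) (by norm_num) ?_
  have hlin : Tendsto (fun n : ℕ => α * n + β) atTop atTop :=
    tendsto_atTop_add_const_right _ β (tendsto_natCast_atTop_atTop.const_mul_atTop hα)
  have hgrowth : ∀ᶠ n : ℕ in atTop, 2 * |x| ≤ (α * n + β + α - 1) ^ α :=
    ((tendsto_rpow_atTop hα).comp (tendsto_atTop_add_const_right _ (α - 1) hlin))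
      |>.eventually_ge_atTop _ |>.mono fun n hn => by
        simpa only [Function.comp, add_sub_assoc] using hn
  filter_upwards [hgrowth, hlin.eventually_ge_atTop 1] with n hn hn1
  have hratio := Gamma_mul_rpow_le_Gamma_add hα hα1 hn1
  rw [Nat.cast_succ, show α * (n + 1 : ℝ) + β = α * n + β + α by ring, Real.norm_eq_abs,
    Real.norm_eq_abs, abs_div, abs_div, abs_of_pos (hΓ n), abs_of_pos (Real.Gamma_pos_of_pos
    (by linarith)), abs_pow, abs_pow, pow_succ, div_le_iff₀ (Real.Gamma_pos_of_pos (by linarith))]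
  calc |x| ^ n * |x| = 1 / 2 * (|x| ^ n / Real.Gamma (α * n + β))
        * (2 * |x| * Real.Gamma (α * n + β)) := by field_simp
    _ ≤ 1 / 2 * (|x| ^ n / Real.Gamma (α * n + β)) * Real.Gamma (α * n + β + α) := by
        gcongr
        nlinarith [hΓ n]

lemma norm_mittagLeffler_term (hα : 0 ≤ α) (hβ : 0 < β) (x : ℝ) (n : ℕ) :
    ‖x ^ n / Real.Gamma (α * n + β)‖ = |x| ^ n / Real.Gamma (α * n + β) := by
  rw [Real.norm_eq_abs, abs_div, abs_pow, abs_of_pos (Real.Gamma_pos_of_pos (by positivity))]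

lemma abs_mittagLeffler_le (hα : 0 < α) (hα1 : α ≤ 1) (hβ : 0 < β) {x X : ℝ}
    (hX : |x| ≤ X) : |mittagLeffler α β x| ≤ mittagLeffler α β X := by
  have hsum := summable_mittagLeffler hα hα1 hβ |x|
  calc |mittagLeffler α β x| = ‖∑' n : ℕ, x ^ n / Real.Gamma (α * n + β)‖ := rfl
    _ ≤ ∑' n : ℕ, ‖x ^ n / Real.Gamma (α * n + β)‖ :=
        norm_tsum_le_tsum_norm (by simpa only [norm_mittagLeffler_term hα.le hβ] using hsum)
    _ = ∑' n : ℕ, |x| ^ n / Real.Gamma (α * n + β) :=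
        tsum_congr (norm_mittagLeffler_term hα.le hβ x)
    _ ≤ mittagLeffler α β X :=
        hsum.tsum_le_tsum (fun n => by gcongr) (summable_mittagLeffler hα hα1 hβ X)

lemma continuous_mittagLeffler (hα : 0 < α) (hα1 : α ≤ 1) (hβ : 0 < β) :
    Continuous (mittagLeffler α β) := by
  refine continuous_iff_continuousAt.2 fun y => ?_
  have hon : ContinuousOn (mittagLeffler α β) (Icc (-(|y| + 1)) (|y| + 1)) := by
    refine continuousOn_tsum (fun n => (continuous_pow n).continuousOn.div_const _)
      (summable_mittagLeffler hα hα1 hβ (|y| + 1)) fun n z hz => ?_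
    rw [norm_mittagLeffler_term hα.le hβ]
    gcongr
    exact abs_le.2 hz
  exact hon.continuousAt (Icc_mem_nhds (by linarith [neg_abs_le y]) (by linarith [le_abs_self y]))

end MittagLeffler

section Beta

variable {p q a b : ℝ}

lemma intervalIntegrable_sub_rpow_mul_sub_rpow (hp : 0 < p) (hq : 0 < q) (hab : a < b) :
    IntervalIntegrable (fun t => (t - a) ^ (p - 1) * (b - t) ^ (q - 1)) volume a b := by
  obtain ⟨m, ham, hmb⟩ := exists_between hab
  refine IntervalIntegrable.trans (b := m) ?_ ?_
  · refine IntervalIntegrable.mul_continuousOn ?_ ?_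
    · simpa using (intervalIntegral.intervalIntegrable_rpow' (a := 0) (b := m - a)
        (r := p - 1) (by linarith)).comp_sub_right a
    · refine ContinuousOn.rpow_const (by fun_prop) fun t ht => Or.inl ?_
      rw [uIcc_of_le ham.le] at ht
      linarith [ht.2]
  · refine IntervalIntegrable.continuousOn_mul ?_ ?_
    · simpa using ((intervalIntegral.intervalIntegrable_rpow' (a := 0) (b := b - m)
        (r := q - 1) (by linarith)).comp_sub_left b).symm
    · refine ContinuousOn.rpow_const (by fun_prop) fun t ht => Or.inl ?_
      rw [uIcc_of_le hmb.le] at ht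
      linarith [ht.1]

lemma integral_rpow_mul_sub_rpow (hp : 0 < p) (hq : 0 < q) {c : ℝ} (hc : 0 < c) :
    ∫ x in (0 : ℝ)..c, x ^ (p - 1) * (c - x) ^ (q - 1)
      = Real.Gamma p * Real.Gamma q / Real.Gamma (p + q) * c ^ (p + q - 1) := by
  have hbeta := Complex.betaIntegral_scaled p q hc
  rw [Complex.betaIntegral_eq_Gamma_mul_div _ _ (by simpa using hp) (by simpa using hq)] at hbeta
  apply Complex.ofReal_injective
  rw [← intervalIntegral.integral_ofReal]
  calc ∫ x in (0 : ℝ)..c, ((x ^ (p - 1) * (c - x) ^ (q - 1) : ℝ) : ℂ)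
      = ∫ x in (0 : ℝ)..c, (x : ℂ) ^ ((p : ℂ) - 1) * ((c : ℂ) - x) ^ ((q : ℂ) - 1) := by
        refine intervalIntegral.integral_congr fun x hx => ?_
        rw [uIcc_of_le hc.le] at hx
        push_cast [Complex.ofReal_cpow hx.1, Complex.ofReal_cpow (sub_nonneg.2 hx.2)]
        rfl
    _ = _ := hbeta
    _ = _ := by
        rw [← Complex.ofReal_add, Complex.Gamma_ofReal, Complex.Gamma_ofReal,
          Complex.Gamma_ofReal]
        push_cast [Complex.ofReal_cpow hc.le]
        ring

lemma integral_sub_rpow_mul_sub_rpow (hp : 0 < p) (hq : 0 < q) (hab : a < b) :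
    ∫ t in a..b, (t - a) ^ (p - 1) * (b - t) ^ (q - 1)
      = Real.Gamma p * Real.Gamma q / Real.Gamma (p + q) * (b - a) ^ (p + q - 1) := by
  rw [← integral_rpow_mul_sub_rpow hp hq (sub_pos.2 hab), ← sub_self a,
    ← intervalIntegral.integral_comp_sub_right]
  simp only [sub_sub_sub_cancel_right]

end Beta

noncomputable def mlKernel (α k β u : ℝ) : ℝ :=
  u ^ (β - 1) * mittagLeffler α β (k * u ^ α)

section MLKernel

variable {α β q u x b : ℝ} (k : ℝ)

lemma hasSum_mlKernel (hα : 0 < α) (hα1 : α ≤ 1) (hβ : 0 < β) (hu : 0 < u) :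
    HasSum (fun n : ℕ => k ^ n * u ^ (α * n + β - 1) / Real.Gamma (α * n + β))
      (mlKernel α k β u) := by
  have hterm (n : ℕ) : u ^ (β - 1) * ((k * u ^ α) ^ n / Real.Gamma (α * n + β))
      = k ^ n * u ^ (α * n + β - 1) / Real.Gamma (α * n + β) := by
    rw [mul_pow, ← Real.rpow_natCast (u ^ α), ← Real.rpow_mul hu.le,
      show α * n + β - 1 = β - 1 + α * n by ring, Real.rpow_add hu]
    ring
  have h := ((summable_mittagLeffler hα hα1 hβ (k * u ^ α)).hasSum).mul_left (u ^ (β - 1))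
  rw [funext hterm] at h
  exact h

lemma mlKernel_eq_rpow_div_add (hα : 0 < α) (hα1 : α ≤ 1) (hβ : 0 < β) (hu : 0 < u) :
    mlKernel α k β u = u ^ (β - 1) / Real.Gamma β + k * mlKernel α k (β + α) u := by
  have htail := (hasSum_nat_add_iff' 1).2 (hasSum_mlKernel k hα hα1 hβ hu)
  have hshift := (hasSum_mlKernel k hα hα1 (by positivity : 0 < β + α) hu).mul_left k
  have hterm (n : ℕ) :
      k ^ (n + 1) * u ^ (α * ↑(n + 1) + β - 1) / Real.Gamma (α * ↑(n + 1) + β)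
        = k * (k ^ n * u ^ (α * n + (β + α) - 1) / Real.Gamma (α * n + (β + α))) := by
    rw [Nat.cast_succ, pow_succ, show α * (n + 1) + β = α * n + (β + α) by ring]
    ring
  rw [funext hterm] at htail
  have hhead := htail.unique hshift
  rw [← hhead, Finset.sum_range_one]
  simp

lemma continuousAt_mlKernel (hα : 0 < α) (hα1 : α ≤ 1) (hβ : 0 < β) (hu : u ≠ 0) :
    ContinuousAt (mlKernel α k β) u :=
  (Real.continuousAt_rpow_const _ _ (Or.inl hu)).mul
    ((continuous_mittagLeffler hα hα1 hβ).continuousAt.comp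
      (continuousAt_const.mul (Real.continuousAt_rpow_const _ _ (Or.inl hu))))

lemma measurable_mlKernel (hα : 0 < α) (hα1 : α ≤ 1) (hβ : 0 < β) :
    Measurable (mlKernel α k β) :=
  (measurable_id.pow_const _).mul ((continuous_mittagLeffler hα hα1 hβ).measurable.comp
    (measurable_const.mul (measurable_id.pow_const _)))

lemma abs_mlKernel_le (hα : 0 < α) (hα1 : α ≤ 1) (hβ : 0 < β) {L : ℝ} (hu : 0 < u)
    (huL : u ≤ L) :
    |mlKernel α k β u| ≤ u ^ (β - 1) * mittagLeffler α β (|k| * L ^ α) := by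
  rw [mlKernel, abs_mul, abs_of_nonneg (by positivity)]
  gcongr
  refine abs_mittagLeffler_le hα hα1 hβ ?_
  rw [abs_mul, abs_of_nonneg (Real.rpow_nonneg hu.le α)]
  gcongr

lemma intervalIntegrable_mlKernel_right (hα : 0 < α) (hα1 : α ≤ 1) (hβ : 0 < β) (hq : 0 < q)
    (hxb : x < b) :
    IntervalIntegrable (fun t => mlKernel α k β (b - t) * (t - x) ^ (q - 1)) volume x b := by
  have hbound := (intervalIntegrable_sub_rpow_mul_sub_rpow hq hβ hxb).mul_const
    (mittagLeffler α β (|k| * (b - x) ^ α))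
  rw [intervalIntegrable_iff_integrableOn_Ioo_of_le hxb.le] at hbound ⊢
  refine hbound.mono' ((((measurable_mlKernel k hα hα1 hβ).comp (measurable_const.sub
    measurable_id)).mul ((measurable_id.sub_const x).pow_const _)).aestronglyMeasurable) ?_
  filter_upwards [ae_restrict_mem measurableSet_Ioo] with t ⟨hxt, htb⟩
  rw [Real.norm_eq_abs, abs_mul, abs_of_nonneg (Real.rpow_nonneg (sub_nonneg.2 hxt.le) _)]
  calc |mlKernel α k β (b - t)| * (t - x) ^ (q - 1)
      ≤ (b - t) ^ (β - 1) * mittagLeffler α β (|k| * (b - x) ^ α) * (t - x) ^ (q - 1) := by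
        gcongr
        exact abs_mlKernel_le k hα hα1 hβ (sub_pos.2 htb) (by linarith)
    _ = _ := by ring

lemma integral_mlKernel_right (hα : 0 < α) (hα1 : α ≤ 1) (hβ : 0 < β) (hq : 0 < q)
    (hxb : x < b) :
    ∫ t in x..b, mlKernel α k β (b - t) * (t - x) ^ (q - 1)
      = Real.Gamma q * mlKernel α k (β + q) (b - x) := by
  have hβn (n : ℕ) : 0 < α * n + β := by positivity
  let F (K : ℝ) (n : ℕ) (t : ℝ) : ℝ :=
    K ^ n / Real.Gamma (α * n + β) * ((t - x) ^ (q - 1) * (b - t) ^ (α * n + β - 1))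
  have hF_integral (K : ℝ) (n : ℕ) : ∫ t in Ioo x b, F K n t = Real.Gamma q *
      (K ^ n * (b - x) ^ (α * n + (β + q) - 1) / Real.Gamma (α * n + (β + q))) := by
    have hΓ := (Real.Gamma_pos_of_pos (hβn n)).ne'
    rw [integral_const_mul, ← integral_Ioc_eq_integral_Ioo, ← intervalIntegral.integral_of_le
      hxb.le, integral_sub_rpow_mul_sub_rpow hq (hβn n) hxb, add_comm q, add_assoc]
    field_simp
  have hF_int (n : ℕ) : IntegrableOn (F k n) (Ioo x b) := by
    have h := (intervalIntegrable_sub_rpow_mul_sub_rpow hq (hβn n) hxb).const_mul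
      (k ^ n / Real.Gamma (α * n + β))
    rwa [intervalIntegrable_iff_integrableOn_Ioo_of_le hxb.le] at h
  have hF_norm (n : ℕ) : ∫ t in Ioo x b, ‖F k n t‖ = ∫ t in Ioo x b, F |k| n t := by
    refine setIntegral_congr_fun measurableSet_Ioo fun t ⟨hxt, htb⟩ => ?_
    rw [Real.norm_eq_abs, abs_mul, abs_div, abs_pow, abs_of_pos (Real.Gamma_pos_of_pos (hβn n)),
      abs_of_nonneg (mul_nonneg (Real.rpow_nonneg (sub_pos.2 hxt).le _)
        (Real.rpow_nonneg (sub_pos.2 htb).le _))]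
  have hbx : 0 < b - x := sub_pos.2 hxb
  have hseries := hasSum_integral_of_summable_integral_norm hF_int (by
    simp only [hF_norm, hF_integral]
    exact ((hasSum_mlKernel |k| hα hα1 (by positivity) hbx).mul_left _).summable)
  have hpointwise : ∀ t ∈ Ioo x b,
      ∑' n, F k n t = mlKernel α k β (b - t) * (t - x) ^ (q - 1) := by
    intro t ⟨_, htb⟩
    rw [← ((hasSum_mlKernel k hα hα1 hβ (sub_pos.2 htb)).mul_right _).tsum_eq]
    exact tsum_congr fun n => by ring
  rw [setIntegral_congr_fun measurableSet_Ioo hpointwise, integral_Ioc_eq_integral_Ioo.symm,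
    ← intervalIntegral.integral_of_le hxb.le] at hseries
  simp only [hF_integral] at hseries
  exact hseries.unique ((hasSum_mlKernel k hα hα1 (by positivity) hbx).mul_left _)

lemma integral_mlKernel_left (hα : 0 < α) (hα1 : α ≤ 1) (hβ : 0 < β) (hq : 0 < q)
    (hxb : x < b) :
    ∫ t in x..b, mlKernel α k β (t - x) * (b - t) ^ (q - 1)
      = Real.Gamma q * mlKernel α k (β + q) (b - x) := by
  have hreflect := intervalIntegral.integral_comp_sub_left (a := x) (b := b)
    (fun t => mlKernel α k β (t - x) * (b - t) ^ (q - 1)) (x + b)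
  simp only [add_sub_cancel_right, add_sub_cancel_left] at hreflect
  rw [← hreflect, ← integral_mlKernel_right k hα hα1 hβ hq hxb]
  congr 1 with t
  rw [show x + b - t - x = b - t by ring, show b - (x + b - t) = t - x by ring]

lemma intervalIntegrable_mlKernel (hα : 0 < α) (hα1 : α ≤ 1) (hβ : 0 < β) {c : ℝ}
    (hc : 0 < c) :
    IntervalIntegrable (mlKernel α k β) volume 0 c := by
  have hbound := (intervalIntegral.intervalIntegrable_rpow' (a := 0) (b := c) (r := β - 1)
    (by linarith)).mul_const (mittagLeffler α β (|k| * c ^ α))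
  rw [intervalIntegrable_iff_integrableOn_Ioo_of_le hc.le] at hbound ⊢
  refine hbound.mono' (measurable_mlKernel k hα hα1 hβ).aestronglyMeasurable ?_
  filter_upwards [ae_restrict_mem measurableSet_Ioo] with u ⟨hu, huc⟩
  exact abs_mlKernel_le k hα hα1 hβ hu huc.le

lemma hasDerivAt_mlKernel_add_one (hα : 0 < α) (hα1 : α ≤ 1) (hβ : 0 < β) (hu : 0 < u) :
    HasDerivAt (mlKernel α k (β + 1)) (mlKernel α k β u) u := by
  have hFTC := intervalIntegral.integral_hasDerivAt_right
    (intervalIntegrable_mlKernel k hα hα1 hβ hu)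
    (measurable_mlKernel k hα hα1 hβ).aestronglyMeasurable.stronglyMeasurableAtFilter
    (continuousAt_mlKernel k hα hα1 hβ hu.ne')
  refine hFTC.congr_of_eventuallyEq ?_
  filter_upwards [Ioi_mem_nhds hu] with y hy
  simpa using (integral_mlKernel_left k hα hα1 hβ one_pos hy).symm

lemma hasDerivAt_mlKernel_one (hα : 0 < α) (hα1 : α ≤ 1) (hu : 0 < u) :
    HasDerivAt (mlKernel α k 1) (k * mlKernel α k α u) u := by
  refine (((hasDerivAt_mlKernel_add_one k hα hα1 hα hu).const_mul k).const_add 1)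
    |>.congr_of_eventuallyEq ?_
  filter_upwards [Ioi_mem_nhds hu] with y hy
  simp [mlKernel_eq_rpow_div_add k hα hα1 one_pos hy, add_comm]

end MLKernel

section RightFractionalIntegral

variable {q b x : ℝ} {f g : ℝ → ℝ}

lemma RLIminusR_congr (hxb : x ≤ b) (hfg : ∀ t ∈ Ioo x b, f t = g t) :
    RLIminusR q b f x = RLIminusR q b g x := by
  simp only [RLIminusR, intervalIntegral.integral_of_le hxb, integral_Ioc_eq_integral_Ioo]
  rw [setIntegral_congr_fun measurableSet_Ioo fun t ht => by rw [hfg t ht]]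

lemma RLIminusR_add (hf : IntervalIntegrable (fun t => f t * (t - x) ^ (q - 1)) volume x b)
    (hg : IntervalIntegrable (fun t => g t * (t - x) ^ (q - 1)) volume x b) :
    RLIminusR q b (fun t => f t + g t) x = RLIminusR q b f x + RLIminusR q b g x := by
  simp only [RLIminusR, add_mul, intervalIntegral.integral_add hf hg, mul_add]

lemma RLIminusR_const_mul (c : ℝ) :
    RLIminusR q b (fun t => c * f t) x = c * RLIminusR q b f x := by
  simp only [RLIminusR, mul_assoc, intervalIntegral.integral_const_mul]
  ring

lemma RLIminusR_mlKernel {α β : ℝ} (k : ℝ) (hα : 0 < α) (hα1 : α ≤ 1) (hβ : 0 < β)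
    (hq : 0 < q) (hxb : x < b) :
    RLIminusR q b (fun t => mlKernel α k β (b - t)) x = mlKernel α k (β + q) (b - x) := by
  rw [RLIminusR, integral_mlKernel_right k hα hα1 hβ hq hxb, ← mul_assoc,
    one_div_mul_cancel (Real.Gamma_pos_of_pos hq).ne', one_mul]

lemma RLIminusR_eq_mlKernel_add {α β γ : ℝ} (k c d : ℝ) (hα : 0 < α) (hα1 : α ≤ 1)
    (hβ : 0 < β) (hγ : 0 < γ) (hq : 0 < q) (hxb : x < b)
    (hf : ∀ t ∈ Ioo x b, f t = c * mlKernel α k β (b - t) + d * mlKernel α k γ (b - t)) :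
    RLIminusR q b f x
      = c * mlKernel α k (β + q) (b - x) + d * mlKernel α k (γ + q) (b - x) := by
  rw [RLIminusR_congr hxb.le hf, RLIminusR_add, RLIminusR_const_mul, RLIminusR_const_mul,
    RLIminusR_mlKernel k hα hα1 hβ hq hxb, RLIminusR_mlKernel k hα hα1 hγ hq hxb]
  · simpa only [mul_assoc] using
      (intervalIntegrable_mlKernel_right k hα hα1 hβ hq hxb).const_mul c
  · simpa only [mul_assoc] using
      (intervalIntegrable_mlKernel_right k hα hα1 hγ hq hxb).const_mul d

end RightFractionalIntegral

theorem inhomogeneous_right_fracDeriv_solution_general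
    (α l k b c : ℝ) (hα : 0 < α) (hα1 : α < 1)
    (φ : ℝ → ℝ)
    (hφ : ∀ s, φ s = c * ((l - s) ^ (α - 1) * mittagLeffler α α (k * (l - s) ^ α))
        + b * l ^ (α - 2) *
            ∫ t in s..l, (t - s) ^ (α - 1) * mittagLeffler α α (k * (t - s) ^ α)
              * (l - t) ^ (1 - α)) :
    ∀ s ∈ Set.Ioo 0 l,
      RLDminusR α l φ s - k * φ s = b * l ^ (α - 2) * (l - s) ^ (1 - α) := by
  rintro s ⟨-, hsl⟩
  have h1α : 0 < 1 - α := by linarith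
  have h2α : 0 < 2 - α := by linarith
  have hls : 0 < l - s := by linarith
  set d := b * l ^ (α - 2) * Real.Gamma (2 - α) with hd
  have hφ_eq : ∀ t < l, φ t = c * mlKernel α k α (l - t) + d * mlKernel α k 2 (l - t) := by
    intro t ht
    have hint := integral_mlKernel_left k hα hα1.le hα h2α ht
    rw [add_sub_cancel, show 2 - α - 1 = 1 - α by ring] at hint
    simp only [mlKernel] at hint ⊢
    rw [hφ t, hint, hd]
    ring
  have hI : RLIminusR (1 - α) l φ
      =ᶠ[𝓝 s] fun x => c * mlKernel α k 1 (l - x) + d * mlKernel α k (3 - α) (l - x) := by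
    filter_upwards [Iio_mem_nhds hsl] with x (hx : x < l)
    have h := RLIminusR_eq_mlKernel_add k c d hα hα1.le hα two_pos h1α hx
      fun t ht => hφ_eq t ht.2
    rwa [show α + (1 - α) = 1 by ring, show 2 + (1 - α) = 3 - α by ring] at h
  have hderiv :
      HasDerivAt (fun x => c * mlKernel α k 1 (l - x) + d * mlKernel α k (3 - α) (l - x))
        (c * -(k * mlKernel α k α (l - s)) + d * -mlKernel α k (2 - α) (l - s)) s := by
    have h1 := (hasDerivAt_mlKernel_one k hα hα1.le hls).comp_const_sub l s
    have h2 := (hasDerivAt_mlKernel_add_one k hα hα1.le h2α hls).comp_const_sub l s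
    rw [show 2 - α + 1 = 3 - α by ring] at h2
    exact (h1.const_mul c).add (h2.const_mul d)
  rw [RLDminusR, hI.deriv_eq, hderiv.deriv, hφ_eq s hsl,
    mlKernel_eq_rpow_div_add k hα hα1.le h2α hls, show 2 - α + α = 2 by ring,
    show 2 - α - 1 = 1 - α by ring, hd]
  field_simp
  ring

/-- Solution formula for the inhomogeneous right-sided fractional equation: for
`0 < α < 1`, `l > 0`, `k, b, c ∈ ℝ` and
`φ(s) = c (l-s)^{α-1} E_{α,α}(k(l-s)^α) + b l^{α-2} ∫_s^l (t-s)^{α-1} E_{α,α}(k(t-s)^α) (l-t)^{1-α} dt`,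
one has `(D_{l-}^α φ)(s) - k φ(s) = b l^{α-2} (l-s)^{1-α}` for every `s ∈ (0,l)`. -/
theorem inhomogeneous_right_fracDeriv_solution
    (α l k b c : ℝ) (hα : 0 < α) (hα1 : α < 1) (hl : 0 < l)
    (φ : ℝ → ℝ)
    (hφ : ∀ s, φ s = c * ((l - s) ^ (α - 1) * mittagLeffler α α (k * (l - s) ^ α))
        + b * l ^ (α - 2) *
            ∫ t in s..l, (t - s) ^ (α - 1) * mittagLeffler α α (k * (t - s) ^ α)
              * (l - t) ^ (1 - α)) :
    ∀ s ∈ Set.Ioo 0 l,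
      RLDminusR α l φ s - k * φ s = b * l ^ (α - 2) * (l - s) ^ (1 - α) :=
  inhomogeneous_right_fracDeriv_solution_general α l k b c hα hα1 φ hφ
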